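/- arXiv:1009.2806 — 3 statements merged into one kernel-verified Lean document; each statement's English description precedes it below -/
import Mathlib

section
/- For the sequence α_n = (1/(2π)) · 16^{n+1}(2n+2)/(16^{n+1}+17), the second differences are negative: for all k ≥ 2, α_k − 2α_{k−1} + α_{k−2} < 0. -/
open Real

theorem stmt_2
    (α : ℕ → ℝ)
    (hα : ∀ n, α n = (1 / (2 * π)) * (16 ^ (n+1) * (2*n+2) / (16 ^ (n+1) + 17))) :
    ∀ k, 2 ≤ k → α k - 2 * α (k-1) + α (k-2) < 0 := by
  intro k hk
  obtain ⟨m, rfl⟩ : ∃ m, k = m + 2 := ⟨k - 2, by omega⟩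
  have h1 : m + 2 - 1 = m + 1 := by omega
  have h2 : m + 2 - 2 = m := by omega
  rw [h1, h2, hα, hα, hα]
  have hπ : (0:ℝ) < π := Real.pi_pos
  have ha : (16:ℝ) ≤ 16 ^ (m+1) := by
    calc (16:ℝ) = 16 ^ 1 := by norm_num
    _ ≤ 16 ^ (m+1) := by
        apply pow_le_pow_right₀ (by norm_num) (by omega)
  set a : ℝ := 16 ^ (m+1) with hadef
  have e2 : (16:ℝ) ^ (m+1+1) = 16 * a := by rw [hadef, pow_succ]; ring
  have e3 : (16:ℝ) ^ (m+2+1) = 256 * a := by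
    rw [hadef]; rw [show m+2+1 = (m+1)+1+1 by omega, pow_succ, pow_succ]; ring
  rw [e2, e3]
  set M : ℝ := (m : ℝ) with hM
  have hM0 : (0:ℝ) ≤ M := Nat.cast_nonneg m
  push_cast
  have d1 : (0:ℝ) < a + 17 := by linarith
  have d2 : (0:ℝ) < 16 * a + 17 := by linarith
  have d3 : (0:ℝ) < 256 * a + 17 := by linarith
  have hC : (0:ℝ) < 1 / (2 * π) := by positivity
  have key : 256 * a * (2*(M+2)+2) / (256*a+17) - 2 * (16 * a * (2*(M+1)+2) / (16*a+17))
      + a * (2*M+2) / (a+17) < 0 := by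
    rw [show (2:ℝ) * (16 * a * (2*(M+1)+2) / (16*a+17)) = 32 * a * (2*(M+1)+2) / (16*a+17) by ring]
    rw [div_sub_div _ _ (ne_of_gt d3) (ne_of_gt d2), div_add_div _ _ (by positivity) (ne_of_gt d1)]
    apply div_neg_of_neg_of_pos _ (by positivity)
    have ha0 : (0:ℝ) < a := by linarith
    nlinarith [mul_le_mul_of_nonneg_left ha ha0.le,
      mul_le_mul_of_nonneg_left ha (mul_nonneg ha0.le ha0.le),
      mul_le_mul_of_nonneg_left ha (mul_nonneg hM0 ha0.le),
      mul_le_mul_of_nonneg_left ha (mul_nonneg (mul_nonneg hM0 ha0.le) ha0.le),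
      mul_nonneg hM0 ha0.le, hM0, ha]
  calc 1 / (2 * π) * (256 * a * (2*(M+2)+2) / (256*a+17))
        - 2 * (1 / (2 * π) * (16 * a * (2*(M+1)+2) / (16*a+17)))
        + 1 / (2 * π) * (a * (2*M+2) / (a+17))
      = 1 / (2 * π) * (256 * a * (2*(M+2)+2) / (256*a+17)
        - 2 * (16 * a * (2*(M+1)+2) / (16*a+17)) + a * (2*M+2) / (a+17)) := by ring
    _ < 0 := mul_neg_of_pos_of_neg hC key
end

section
/- Let α_n = (1/(2π)) · 16^{n+1}(2n+2)/(16^{n+1}+17). Then the entire function F(t) = (1−t)² ∑_{k=0}^∞ α_k t^k (convergent for |t| < 1) has a zero in the open unit disc. -/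
/-!
Write `π α_n = (n + 1) - δ_n` with `δ_n = 17 (n + 1) / (16^(n+1) + 17)`, so that for real
`|y| < 1` the series `g y = ∑ α_k y^k` equals `π⁻¹ ((1 - y)⁻² - ∑ δ_k y^k)`. At `y = 0` it is
`α_0 > 0`. At `y = -4/5` the first term is `25/81 ≈ 0.309`, while `δ_k` decays like `k 16^(-k)`,
so the defect series is essentially its first two terms `17/33 - (4/5)(34/273) ≈ 0.416`; hence
`g (-4/5) < 0`. The intermediate value theorem gives a real zero `c ∈ [-4/5, 0]` of `g`, and
`F c = (1 - c)² g c = 0`.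
-/

open Real

theorem hasSum_succ_mul_geometric {𝕜 : Type*} [NormedDivisionRing 𝕜] {r : 𝕜} (hr : ‖r‖ < 1) :
    HasSum (fun n : ℕ => ((n : 𝕜) + 1) * r ^ n) (1 / (1 - r) ^ 2) := by
  simpa using hasSum_choose_mul_geometric_of_norm_lt_one 1 hr

theorem continuousOn_tsum_mul_pow {𝕜 : Type*} [NormedDivisionRing 𝕜] [CompleteSpace 𝕜]
    {a : ℕ → 𝕜} {r : ℝ} (h : Summable fun k => ‖a k‖ * r ^ k) :
    ContinuousOn (fun y => ∑' k, a k * y ^ k) (Metric.closedBall 0 r) :=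
  continuousOn_tsum (fun k => (continuous_const.mul (continuous_pow k)).continuousOn) h
    fun k y hy => by
      rw [norm_mul, norm_pow]
      gcongr
      simpa using hy

theorem tsum_mul_zero_pow {R : Type*} [Semiring R] [TopologicalSpace R] (a : ℕ → R) :
    ∑' k, a k * (0 : R) ^ k = a 0 := by
  rw [tsum_eq_single 0 fun k hk => by simp [zero_pow hk]]
  simp

noncomputable def alphaCoeff (n : ℕ) : ℝ :=
  (1 / (2 * π)) * (16 ^ (n+1) * (2*n+2) / (16 ^ (n+1) + 17))

noncomputable def alphaDefect (n : ℕ) : ℝ :=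
  17 * (n + 1) / (16 ^ (n + 1) + 17)

theorem alphaDefect_nonneg (n : ℕ) : 0 ≤ alphaDefect n := by
  unfold alphaDefect; positivity

theorem alphaDefect_le (n : ℕ) : alphaDefect n ≤ n + 1 := by
  unfold alphaDefect
  rw [div_le_iff₀ (by positivity)]
  nlinarith [pow_pos (by norm_num : (0 : ℝ) < 16) (n + 1), (n.cast_nonneg : (0 : ℝ) ≤ n)]

theorem pi_mul_alphaCoeff (n : ℕ) : π * alphaCoeff n = n + 1 - alphaDefect n := by
  unfold alphaCoeff alphaDefect
  field_simp
  ring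

theorem abs_alphaCoeff_le (n : ℕ) : |alphaCoeff n| ≤ n + 1 := by
  have := pi_mul_alphaCoeff n
  have := alphaDefect_nonneg n
  have := alphaDefect_le n
  rw [abs_le]
  constructor <;> nlinarith [pi_gt_three]

theorem summable_alphaDefect_mul_pow {y : ℝ} (hy : |y| < 1) :
    Summable fun k => alphaDefect k * y ^ k :=
  (hasSum_succ_mul_geometric (r := |y|) (by rwa [Real.norm_eq_abs, abs_abs])).summable
    |>.of_norm_bounded fun k => by
      rw [Real.norm_eq_abs, abs_mul, abs_pow, abs_of_nonneg (alphaDefect_nonneg k)]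
      gcongr
      exact alphaDefect_le k

theorem hasSum_alphaCoeff_mul_pow {y : ℝ} (hy : |y| < 1) :
    HasSum (fun k => alphaCoeff k * y ^ k)
      (π⁻¹ * (1 / (1 - y) ^ 2 - ∑' k, alphaDefect k * y ^ k)) := by
  have h := ((hasSum_succ_mul_geometric (r := y) (by rwa [Real.norm_eq_abs])).sub
    (summable_alphaDefect_mul_pow hy).hasSum).mul_left π⁻¹
  refine h.congr_fun fun k => ?_
  rw [← sub_mul, ← pi_mul_alphaCoeff, ← mul_assoc, ← mul_assoc, inv_mul_cancel₀ pi_ne_zero, one_mul]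

theorem abs_alphaDefect_mul_pow_le (k : ℕ) :
    |alphaDefect k * (-4 / 5 : ℝ) ^ k| ≤ 17 / 16 * (1 / 10) ^ k := by
  have hdefect : alphaDefect k ≤ 17 * (k + 1) / 16 ^ (k + 1) := by
    unfold alphaDefect
    gcongr
    linarith
  have hsucc : (k : ℝ) + 1 ≤ 2 ^ k := by exact_mod_cast Nat.lt_two_pow_self
  calc |alphaDefect k * (-4 / 5 : ℝ) ^ k| = alphaDefect k * (4 / 5) ^ k := by
        rw [abs_mul, abs_of_nonneg (alphaDefect_nonneg k), abs_pow]; norm_num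
    _ ≤ 17 * 2 ^ k / 16 ^ (k + 1) * (4 / 5) ^ k := by gcongr; exact hdefect.trans (by gcongr)
    _ = 17 / 16 * (1 / 10) ^ k := by
        rw [pow_succ, show (1 / 10 : ℝ) ^ k = 2 ^ k * (4 / 5) ^ k / 16 ^ k by
          rw [← mul_pow, ← div_pow]; norm_num]
        field_simp

theorem lt_tsum_alphaDefect_mul_pow : 25 / 81 < ∑' k, alphaDefect k * (-4 / 5 : ℝ) ^ k := by
  have hhead : ∑ k ∈ Finset.range 2, alphaDefect k * (-4 / 5 : ℝ) ^ k = 6239 / 15015 := by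
    norm_num [Finset.sum_range_succ, alphaDefect]
  have htail : |∑' k, alphaDefect (k + 2) * (-4 / 5 : ℝ) ^ (k + 2)| ≤ 17 / 1440 := by
    have hgeom := (hasSum_geometric_of_lt_one (r := (1 / 10 : ℝ)) (by norm_num) (by norm_num))
      |>.mul_left (17 / 16 * (1 / 10) ^ 2)
    rw [show (17 / 16 * (1 / 10) ^ 2 * (1 - 1 / 10)⁻¹ : ℝ) = 17 / 1440 by norm_num] at hgeom
    refine tsum_of_norm_bounded (f := fun k => alphaDefect (k + 2) * (-4 / 5 : ℝ) ^ (k + 2)) hgeom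
      fun k => ?_
    rw [Real.norm_eq_abs]
    exact (abs_alphaDefect_mul_pow_le (k + 2)).trans_eq (by ring)
  rw [← (summable_alphaDefect_mul_pow (by norm_num)).sum_add_tsum_nat_add 2, hhead]
  linarith [(abs_le.mp htail).1]

noncomputable def alphaSeries (y : ℝ) : ℝ :=
  ∑' k, alphaCoeff k * y ^ k

theorem alphaSeries_zero_pos : 0 < alphaSeries 0 := by
  rw [alphaSeries, tsum_mul_zero_pow]
  unfold alphaCoeff
  positivity

theorem alphaSeries_neg_four_fifths_neg : alphaSeries (-4 / 5) < 0 := by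
  rw [alphaSeries, (hasSum_alphaCoeff_mul_pow (by norm_num)).tsum_eq]
  have := lt_tsum_alphaDefect_mul_pow
  exact mul_neg_of_pos_of_neg (inv_pos.mpr pi_pos) (by norm_num; linarith)

theorem continuousOn_alphaSeries : ContinuousOn alphaSeries (Set.Icc (-4 / 5) 0) := by
  refine (continuousOn_tsum_mul_pow (r := 4 / 5) ?_).mono ?_
  · exact (hasSum_succ_mul_geometric (r := (4 / 5 : ℝ)) (by norm_num)).summable.of_nonneg_of_le
      (fun k => by positivity) fun k => by gcongr; exact abs_alphaCoeff_le k
  · rw [Real.closedBall_eq_Icc]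
    exact Set.Icc_subset_Icc (by norm_num) (by norm_num)

theorem stmt_5
    (α : ℕ → ℝ)
    (hα : ∀ n, α n = (1 / (2 * π)) * (16 ^ (n+1) * (2*n+2) / (16 ^ (n+1) + 17)))
    (F : ℂ → ℂ)
    (hF : ∀ t, F t = (1 - t) ^ 2 * ∑' k : ℕ, (α k : ℂ) * t ^ k) :
    ∃ t : ℂ, ‖t‖ < 1 ∧ F t = 0 := by
  obtain rfl : α = alphaCoeff := funext hα
  obtain ⟨c, hc, hgc⟩ := intermediate_value_Icc (by norm_num) continuousOn_alphaSeries
    ⟨alphaSeries_neg_four_fifths_neg.le, alphaSeries_zero_pos.le⟩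
  refine ⟨c, ?_, ?_⟩
  · rw [Complex.norm_real, Real.norm_eq_abs, abs_lt]
    constructor <;> linarith [hc.1, hc.2]
  · rw [hF, ← Complex.ofReal_one, ← Complex.ofReal_sub]
    simp_rw [← Complex.ofReal_pow, ← Complex.ofReal_mul, ← Complex.ofReal_tsum]
    rw [← alphaSeries, hgc, Complex.ofReal_zero, mul_zero]
end

section
/- Let λ be a measurable radial weight on the unit disc with 1/C ≤ λ ≤ C, and α_n = 1/(2π ∫₀¹ r^{2n+1} λ(r) dr). Then the difference sequence {α_{n+1} − α_n} is bounded; more precisely there are constants c₁, c₂ > 0 depending only on C with c₁ ≤ α_{n+1} − α_n ≤ c₂ for all n. -/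
open MeasureTheory Real

theorem stmt_15
    (lam : ℝ → ℝ) (hm : Measurable lam)
    (C : ℝ) (hC : 0 < C) (hlam : ∀ r ∈ Set.Ico (0:ℝ) 1, 1 / C ≤ lam r ∧ lam r ≤ C)
    (α : ℕ → ℝ)
    (hα : ∀ n, α n = 1 / (2 * π * ∫ r in (0:ℝ)..1, r ^ (2*n+1) * lam r)) :
    ∃ c₁ c₂ : ℝ, 0 < c₁ ∧ 0 < c₂ ∧
      ∀ n, c₁ ≤ α (n+1) - α n ∧ α (n+1) - α n ≤ c₂ := by
  have hπ := Real.pi_pos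
  -- almost everywhere on [0,1], the point is in [0,1)
  have hae : ∀ᵐ r ∂(volume.restrict (Set.Icc (0:ℝ) 1)), r ∈ Set.Ico (0:ℝ) 1 := by
    have h1 : ∀ᵐ r ∂(volume.restrict (Set.Icc (0:ℝ) 1)), r ≠ 1 := by
      refine ae_restrict_of_ae ?_
      rw [ae_iff]
      simpa using Real.volume_singleton (x := (1:ℝ))
    filter_upwards [ae_restrict_mem measurableSet_Icc, h1] with r hr hr1
    exact ⟨hr.1, lt_of_le_of_ne hr.2 hr1⟩
  -- integrability
  have hmf : ∀ k : ℕ, IntervalIntegrable (fun r => r ^ k * lam r) volume 0 1 := by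
    intro k
    rw [intervalIntegrable_iff_integrableOn_Ioc_of_le zero_le_one,
      integrableOn_Ioc_iff_integrableOn_Ioo]
    refine Measure.integrableOn_of_bounded (M := C) (by simp) ?_ ?_
    · exact ((measurable_id.pow_const k).mul hm).aestronglyMeasurable
    · refine (ae_restrict_iff' measurableSet_Ioo).2 (ae_of_all _ fun r hr => ?_)
      obtain ⟨h1, h2⟩ := hlam r ⟨hr.1.le, hr.2⟩
      have hr0 : (0:ℝ) ≤ r := hr.1.le
      have hrk : r ^ k ≤ 1 := pow_le_one₀ hr0 hr.2.le
      have hl0 : 0 ≤ lam r := le_trans (by positivity) h1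
      rw [Real.norm_eq_abs, abs_of_nonneg (by positivity)]
      calc r ^ k * lam r ≤ 1 * C := mul_le_mul hrk h2 hl0 one_pos.le
        _ = C := one_mul C
  have hpow : ∀ k : ℕ, IntervalIntegrable (fun r : ℝ => r ^ k) volume 0 1 :=
    fun k => intervalIntegral.intervalIntegrable_pow k
  have hval : ∀ k : ℕ, (∫ r in (0:ℝ)..1, r ^ k) = 1 / ((k:ℝ) + 1) := by
    intro k
    rw [integral_pow]
    simp
  -- upper bound for the integrals
  have hub : ∀ k : ℕ, (∫ r in (0:ℝ)..1, r ^ k * lam r) ≤ C * (1 / ((k:ℝ) + 1)) := by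
    intro k
    have h : (∫ r in (0:ℝ)..1, r ^ k * lam r) ≤ ∫ r in (0:ℝ)..1, C * r ^ k := by
      refine intervalIntegral.integral_mono_ae_restrict zero_le_one (hmf k)
        ((hpow k).const_mul C) ?_
      filter_upwards [hae] with r hr
      obtain ⟨h1, h2⟩ := hlam r hr
      have hr0 : (0:ℝ) ≤ r := hr.1
      calc r ^ k * lam r ≤ r ^ k * C := mul_le_mul_of_nonneg_left h2 (by positivity)
        _ = C * r ^ k := by ring
    calc (∫ r in (0:ℝ)..1, r ^ k * lam r) ≤ ∫ r in (0:ℝ)..1, C * r ^ k := h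
      _ = C * (1 / ((k:ℝ) + 1)) := by
          rw [intervalIntegral.integral_const_mul, hval]
  -- lower bound for the integrals
  have hlb : ∀ k : ℕ, (1 / C) * (1 / ((k:ℝ) + 1)) ≤ ∫ r in (0:ℝ)..1, r ^ k * lam r := by
    intro k
    have h : (∫ r in (0:ℝ)..1, (1 / C) * r ^ k) ≤ ∫ r in (0:ℝ)..1, r ^ k * lam r := by
      refine intervalIntegral.integral_mono_ae_restrict zero_le_one
        ((hpow k).const_mul (1 / C)) (hmf k) ?_
      filter_upwards [hae] with r hr
      obtain ⟨h1, h2⟩ := hlam r hr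
      have hr0 : (0:ℝ) ≤ r := hr.1
      calc (1 / C) * r ^ k = r ^ k * (1 / C) := by ring
        _ ≤ r ^ k * lam r := mul_le_mul_of_nonneg_left h1 (by positivity)
    calc (1 / C) * (1 / ((k:ℝ) + 1)) = ∫ r in (0:ℝ)..1, (1 / C) * r ^ k := by
          rw [intervalIntegral.integral_const_mul, hval]
      _ ≤ _ := h
  -- bounds for the difference of consecutive integrals
  have hdiff : ∀ k : ℕ,
      (1 / C) * (1 / ((k:ℝ) + 1) - 1 / ((k:ℝ) + 3)) ≤
        (∫ r in (0:ℝ)..1, r ^ k * lam r) - (∫ r in (0:ℝ)..1, r ^ (k+2) * lam r) ∧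
      (∫ r in (0:ℝ)..1, r ^ k * lam r) - (∫ r in (0:ℝ)..1, r ^ (k+2) * lam r) ≤
        C * (1 / ((k:ℝ) + 1) - 1 / ((k:ℝ) + 3)) := by
    intro k
    have hsub : (∫ r in (0:ℝ)..1, r ^ k * lam r) - (∫ r in (0:ℝ)..1, r ^ (k+2) * lam r)
        = ∫ r in (0:ℝ)..1, (r ^ k * lam r - r ^ (k+2) * lam r) := by
      rw [intervalIntegral.integral_sub (hmf k) (hmf (k+2))]
    have hcint : ∀ c : ℝ, (∫ r in (0:ℝ)..1, c * (r ^ k - r ^ (k+2)))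
        = c * (1 / ((k:ℝ) + 1) - 1 / ((k:ℝ) + 3)) := by
      intro c
      rw [intervalIntegral.integral_const_mul,
        intervalIntegral.integral_sub (hpow k) (hpow (k+2)), hval, hval]
      push_cast; ring_nf
    have hint_sub : IntervalIntegrable (fun r : ℝ => r ^ k * lam r - r ^ (k+2) * lam r)
        volume 0 1 := (hmf k).sub (hmf (k+2))
    constructor
    · rw [hsub, ← hcint (1 / C)]
      refine intervalIntegral.integral_mono_ae_restrict zero_le_one
        (((hpow k).sub (hpow (k+2))).const_mul (1 / C)) hint_sub ?_
      filter_upwards [hae] with r hr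
      obtain ⟨h1, h2⟩ := hlam r hr
      have hr0 : (0:ℝ) ≤ r := hr.1
      have hmono : r ^ (k+2) ≤ r ^ k := pow_le_pow_of_le_one hr0 hr.2.le (by omega)
      have : (1 / C) * (r ^ k - r ^ (k+2)) ≤ (r ^ k - r ^ (k+2)) * lam r := by
        calc (1 / C) * (r ^ k - r ^ (k+2)) = (r ^ k - r ^ (k+2)) * (1 / C) := by ring
          _ ≤ (r ^ k - r ^ (k+2)) * lam r :=
              mul_le_mul_of_nonneg_left h1 (by linarith)
      calc (1 / C) * (r ^ k - r ^ (k+2)) ≤ (r ^ k - r ^ (k+2)) * lam r := this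
        _ = r ^ k * lam r - r ^ (k+2) * lam r := by ring
    · rw [hsub, ← hcint C]
      refine intervalIntegral.integral_mono_ae_restrict zero_le_one hint_sub
        (((hpow k).sub (hpow (k+2))).const_mul C) ?_
      filter_upwards [hae] with r hr
      obtain ⟨h1, h2⟩ := hlam r hr
      have hr0 : (0:ℝ) ≤ r := hr.1
      have hmono : r ^ (k+2) ≤ r ^ k := pow_le_pow_of_le_one hr0 hr.2.le (by omega)
      calc r ^ k * lam r - r ^ (k+2) * lam r = (r ^ k - r ^ (k+2)) * lam r := by ring
        _ ≤ (r ^ k - r ^ (k+2)) * C := mul_le_mul_of_nonneg_left h2 (by linarith)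
        _ = C * (r ^ k - r ^ (k+2)) := by ring
  refine ⟨1 / (π * C ^ 3), C ^ 3 / π, by positivity, by positivity, fun n => ?_⟩
  set a := ∫ r in (0:ℝ)..1, r ^ (2*n+1) * lam r with ha'
  set b := ∫ r in (0:ℝ)..1, r ^ (2*(n+1)+1) * lam r with hb'
  have hk : 2*(n+1)+1 = (2*n+1)+2 := by ring
  have hb2 : b = ∫ r in (0:ℝ)..1, r ^ ((2*n+1)+2) * lam r := by rw [hb', hk]
  set p : ℝ := 1 / (2*(n:ℝ)+2) with hp'
  set q : ℝ := 1 / (2*(n:ℝ)+4) with hq'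
  have hn0 : (0:ℝ) ≤ (n:ℝ) := Nat.cast_nonneg n
  have hp0 : 0 < p := by rw [hp']; positivity
  have hq0 : 0 < q := by rw [hq']; positivity
  have hcast1 : ((2*n+1 : ℕ):ℝ) + 1 = 2*(n:ℝ)+2 := by push_cast; ring
  have hcast2 : ((2*n+1 : ℕ):ℝ) + 3 = 2*(n:ℝ)+4 := by push_cast; ring
  have hcast3 : ((2*(n+1)+1 : ℕ):ℝ) + 1 = 2*(n:ℝ)+4 := by push_cast; ring
  have haub : a ≤ C * p := by have := hub (2*n+1); rwa [hcast1] at this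
  have halb : (1 / C) * p ≤ a := by have := hlb (2*n+1); rwa [hcast1] at this
  have hbub : b ≤ C * q := by have := hub (2*(n+1)+1); rwa [hcast3] at this
  have hblb : (1 / C) * q ≤ b := by have := hlb (2*(n+1)+1); rwa [hcast3] at this
  have hd := hdiff (2*n+1)
  rw [hcast1, hcast2, ← hb2] at hd
  have hpq : p - q = 2 * p * q := by
    rw [hp', hq']; field_simp; ring
  have hdlb : (1 / C) * (2 * p * q) ≤ a - b := by rw [← hpq]; exact hd.1
  have hdub : a - b ≤ C * (2 * p * q) := by rw [← hpq]; exact hd.2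
  have ha0 : 0 < a := lt_of_lt_of_le (by positivity) halb
  have hb0 : 0 < b := lt_of_lt_of_le (by positivity) hblb
  rw [hα, hα]
  have key : 1 / (2 * π * b) - 1 / (2 * π * a) = (a - b) / (2 * π * a * b) := by
    field_simp
  rw [hk, ← hb2, ← ha', key]  -- align goal with a, b
  constructor
  · rw [le_div_iff₀ (by positivity)]
    have e : 1 / (π * C ^ 3) * (2 * π * a * b) = 2 / C ^ 3 * (a * b) := by
      field_simp
    rw [e]
    calc 2 / C ^ 3 * (a * b) ≤ 2 / C ^ 3 * ((C * p) * (C * q)) := by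
          have : a * b ≤ (C * p) * (C * q) :=
            mul_le_mul haub hbub hb0.le (by positivity)
          exact mul_le_mul_of_nonneg_left this (by positivity)
      _ = (1 / C) * (2 * p * q) := by field_simp
      _ ≤ a - b := hdlb
  · rw [div_le_iff₀ (by positivity)]
    have e : C ^ 3 / π * (2 * π * a * b) = 2 * C ^ 3 * (a * b) := by
      field_simp
    rw [e]
    calc a - b ≤ C * (2 * p * q) := hdub
      _ = 2 * C ^ 3 * (((1 / C) * p) * ((1 / C) * q)) := by field_simp
      _ ≤ 2 * C ^ 3 * (a * b) := by
          have : ((1 / C) * p) * ((1 / C) * q) ≤ a * b :=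
            mul_le_mul halb hblb (by positivity) ha0.le
          exact mul_le_mul_of_nonneg_left this (by positivity)
end
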